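/- Let K ⊆ ℕ be finite and let ρ ⊆ I × I be K-symmetric. If there exist ξ₀ = (ν₀, μ₀) ∈ I with ν₀ ∉ K and η₀ = (ν₁, μ₁) ∈ I with ν₁ ∉ K ∪ {ν₀} such that (ξ₀, η₀) ∈ ρ, then for every ξ = (ν, μ) ∈ I with ν ∉ K and every η = (ν', μ') ∈ I with ν' ∉ K ∪ {ν}, one has (ξ, η) ∈ ρ. -/
import Mathlib


/-- Membership in the group `𝔊` of automorphisms underlying the permutation model `Σ₂`:
permutations of `I = ℕ × Fin 2` acting by a permutation of `ℕ` together with, for each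
`n`, a permutation of the pair `{n} × Fin 2`. -/
def InG (π : Equiv.Perm (ℕ × Fin 2)) : Prop :=
  ∃ (φ : Equiv.Perm ℕ) (πn : ℕ → Equiv.Perm (Fin 2)),
    ∀ (n : ℕ) (m : Fin 2), π (n, m) = (φ n, πn n m)

/-- `π` fixes every point of `K × Fin 2`. -/
def FixesK (π : Equiv.Perm (ℕ × Fin 2)) (K : Set ℕ) : Prop :=
  ∀ ξ : ℕ × Fin 2, ξ.1 ∈ K → π ξ = ξ

/-- `δ ⊆ I` is `K`-symmetric: `π '' δ = δ` for every `π ∈ 𝔊` fixing `K × Fin 2` pointwise. -/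
def SymmSet (K : Set ℕ) (δ : Set (ℕ × Fin 2)) : Prop :=
  ∀ π : Equiv.Perm (ℕ × Fin 2), InG π → FixesK π K → π '' δ = δ

/-- `ρ ⊆ I × I` is `K`-symmetric: for every `π ∈ 𝔊` fixing `K × Fin 2` pointwise,
`(π ξ, π η) ∈ ρ ↔ (ξ, η) ∈ ρ`. -/
def SymmRel (K : Set ℕ) (ρ : Set ((ℕ × Fin 2) × (ℕ × Fin 2))) : Prop :=
  ∀ π : Equiv.Perm (ℕ × Fin 2), InG π → FixesK π K →
    ∀ ξ η : ℕ × Fin 2, ((π ξ, π η) ∈ ρ ↔ (ξ, η) ∈ ρ)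

/-- If a `K`-symmetric `ρ` relates some `ξ₀ = (ν₀, μ₀)` with `ν₀ ∉ K` to some
`η₀ = (ν₁, μ₁)` with `ν₁ ∉ K ∪ {ν₀}`, then it relates every such pair. -/
lemma aux_move (K : Set ℕ) (ρ : Set ((ℕ × Fin 2) × (ℕ × Fin 2))) (hρ : SymmRel K ρ)
    (a b e f : ℕ) (α β γ δ : Fin 2)
    (ha : a ∉ K) (hb : b ∉ K) (he : e ∉ K) (hf : f ∉ K)
    (hab : a ≠ b) (hef : e ≠ f) (hae : a ≠ e) (haf : a ≠ f) (hbe : b ≠ e) (hbf : b ≠ f) :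
    ((((e, β) : ℕ × Fin 2), ((f, δ) : ℕ × Fin 2)) ∈ ρ ↔
      (((a, α) : ℕ × Fin 2), ((b, γ) : ℕ × Fin 2)) ∈ ρ) := by
  set φ : Equiv.Perm ℕ := (Equiv.swap a e).trans (Equiv.swap b f) with hφ
  set πn : ℕ → Equiv.Perm (Fin 2) := fun n =>
    if n = a then Equiv.swap α β else if n = b then Equiv.swap γ δ else 1 with hπn
  set π : Equiv.Perm (ℕ × Fin 2) := Equiv.prodShear φ πn with hπ
  have hInG : InG π := ⟨φ, πn, fun n m => rfl⟩
  have hFix : FixesK π K := by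
    rintro ⟨n, m⟩ hn
    have h1 : n ≠ a := fun h => ha (h ▸ hn)
    have h2 : n ≠ b := fun h => hb (h ▸ hn)
    have h3 : n ≠ e := fun h => he (h ▸ hn)
    have h4 : n ≠ f := fun h => hf (h ▸ hn)
    simp [hπ, hφ, hπn, Equiv.prodShear, Equiv.swap_apply_of_ne_of_ne, h1, h2, h3, h4]
  have := hρ π hInG hFix (a, α) (b, γ)
  have hπa : π (a, α) = (e, β) := by
    simp [hπ, hφ, hπn, Equiv.prodShear, Equiv.swap_apply_of_ne_of_ne, hae.symm, hbe.symm, hef, hab]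
  have hπb : π (b, γ) = (f, δ) := by
    simp [hπ, hφ, hπn, Equiv.prodShear, Equiv.swap_apply_of_ne_of_ne, hab.symm, hbe]
  rw [hπa, hπb] at this
  exact this

theorem stmt_7 (K : Set ℕ) (hK : K.Finite) (ρ : Set ((ℕ × Fin 2) × (ℕ × Fin 2)))
    (hρ : SymmRel K ρ) (ν₀ ν₁ : ℕ) (μ₀ μ₁ : Fin 2)
    (hν₀ : ν₀ ∉ K) (hν₁ : ν₁ ∉ K ∪ {ν₀})
    (h : (((ν₀, μ₀) : ℕ × Fin 2), ((ν₁, μ₁) : ℕ × Fin 2)) ∈ ρ) :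
    ∀ (ν ν' : ℕ) (μ μ' : Fin 2), ν ∉ K → ν' ∉ K ∪ {ν} →
      (((ν, μ) : ℕ × Fin 2), ((ν', μ') : ℕ × Fin 2)) ∈ ρ := by
  intro ν ν' μ μ' hν hν'
  simp only [Set.mem_union, Set.mem_singleton_iff, not_or] at hν₁ hν'
  obtain ⟨hν₁K, hν₁0⟩ := hν₁
  obtain ⟨hν'K, hν'ν⟩ := hν'
  -- pick fresh e, f
  have hfin : (K ∪ {ν₀, ν₁, ν, ν'}).Finite := hK.union (Set.toFinite _)
  obtain ⟨e, he⟩ := hfin.infinite_compl.nonempty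
  have hfin2 : (insert e (K ∪ {ν₀, ν₁, ν, ν'})).Finite := hfin.insert e
  obtain ⟨f, hf⟩ := hfin2.infinite_compl.nonempty
  simp only [Set.mem_compl_iff, Set.mem_insert_iff, Set.mem_union, Set.mem_singleton_iff, not_or] at he hf
  obtain ⟨heK, he0, he1, heν, heν'⟩ := he
  obtain ⟨hfe, hfK, hf0, hf1, hfν, hfν'⟩ := hf
  have step1 := aux_move K ρ hρ ν₀ ν₁ e f μ₀ μ μ₁ μ' hν₀ hν₁K heK hfK
    (fun h => hν₁0 h.symm) (fun h => hfe h.symm)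
    (fun h => he0 h.symm) (fun h => hf0 h.symm) (fun h => he1 h.symm) (fun h => hf1 h.symm)
  have step2 := aux_move K ρ hρ ν ν' e f μ μ μ' μ' hν hν'K heK hfK
    (fun h => hν'ν h.symm) (fun h => hfe h.symm)
    (fun h => heν h.symm) (fun h => hfν h.symm) (fun h => heν' h.symm) (fun h => hfν' h.symm)
  exact step2.mp (step1.mpr h)
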